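/- arXiv:2111.12673 — 3 statements merged into one kernel-verified Lean document; each statement's English description precedes it below -/
import Mathlib

section
/- Let R be an integrable real-valued random variable on a probability space whose distribution is symmetric about Q ∈ ℝ (that is, R − Q and Q − R have the same distribution), and let d ≥ 0. Then the expectation of the clamp of R to the interval [Q − d, Q + d] equals Q, i.e. E[max(Q − d, min(Q + d, R))] = Q. -/
/-!
Centred at `Q`, the clamp to `[Q - d, Q + d]` is `Q + g (R - Q)` with `g y = max (-d) (min d y)`.
For `d ≥ 0` the map `g` is odd and bounded, so `g (R - Q)` is integrable, and since `R - Q` and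
`Q - R` have the same law, `E[g (R - Q)] = E[g (Q - R)] = -E[g (R - Q)]`, which forces it to vanish.
-/

open MeasureTheory

theorem integral_comp_eq_zero_of_odd {Ω E F : Type*} [MeasurableSpace Ω] {μ : Measure Ω}
    [AddGroup E] [MeasurableSpace E] [MeasurableNeg E]
    [NormedAddCommGroup F] [NormedSpace ℝ F]
    {X : Ω → E} (hX : AEMeasurable X μ) (hsymm : μ.map X = μ.map (fun ω => -X ω))
    {f : E → F} (hf : AEStronglyMeasurable f (μ.map X)) (hodd : ∀ x, f (-x) = -f x) :
    ∫ ω, f (X ω) ∂μ = 0 := by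
  have hX' : AEMeasurable (fun ω => -X ω) μ := hX.neg
  have hflip : ∫ ω, f (X ω) ∂μ = ∫ ω, f (-X ω) ∂μ := by
    rw [← integral_map hX hf, hsymm, integral_map hX' (hsymm ▸ hf)]
  simp_rw [hodd, integral_neg] at hflip
  rw [eq_neg_iff_add_eq_zero, ← two_smul ℝ] at hflip
  exact (smul_eq_zero.mp hflip).resolve_left two_ne_zero

section Clamp

variable {α : Type*} [AddCommGroup α] [LinearOrder α] [IsOrderedAddMonoid α]

theorem max_neg_min_neg {d : α} (hd : 0 ≤ d) (x : α) :
    max (-d) (min d (-x)) = -max (-d) (min d x) := by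
  rw [← min_neg_neg, ← max_neg_neg, neg_neg, max_min_distrib_left, max_eq_right (neg_le_self hd)]

theorem abs_max_neg_min_le {d : α} (hd : 0 ≤ d) (x : α) : |max (-d) (min d x)| ≤ d :=
  abs_le.2 ⟨le_max_left _ _, max_le (neg_le_self hd) (min_le_left _ _)⟩

theorem max_sub_min_add_eq_add (q d x : α) :
    max (q - d) (min (q + d) x) = q + max (-d) (min d (x - q)) := by
  rw [← max_add_add_left, ← min_add_add_left, add_sub_cancel, sub_eq_add_neg]

end Clamp

theorem expectation_clamp_symmetric_general
    {Ω : Type*} [MeasurableSpace Ω] (μ : Measure Ω) [IsProbabilityMeasure μ]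
    (R : Ω → ℝ) (hmeas : Measurable R)
    (Q d : ℝ) (hd : 0 ≤ d)
    (hsym : μ.map (fun ω => R ω - Q) = μ.map (fun ω => Q - R ω)) :
    ∫ ω, max (Q - d) (min (Q + d) (R ω)) ∂μ = Q := by
  set g : ℝ → ℝ := fun y => max (-d) (min d y)
  have hg : Measurable g := by fun_prop
  have hX : Measurable fun ω => R ω - Q := by fun_prop
  have hcentered : ∫ ω, g (R ω - Q) ∂μ = 0 :=
    integral_comp_eq_zero_of_odd hX.aemeasurable (by simpa only [neg_sub] using hsym)
      hg.aestronglyMeasurable (max_neg_min_neg hd)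
  have hint : Integrable (fun ω => g (R ω - Q)) μ :=
    .of_bound (hg.comp hX).aestronglyMeasurable d
      (ae_of_all _ fun ω => abs_max_neg_min_le hd _)
  simp_rw [max_sub_min_add_eq_add Q d]
  rw [integral_add (integrable_const Q) hint, hcentered, integral_const]
  simp

/-- If `R` is an integrable real random variable whose distribution is
symmetric about `Q` (i.e. `R - Q` and `Q - R` have the same distribution) and `d ≥ 0`,
then the expectation of the clamp of `R` to `[Q - d, Q + d]` equals `Q`. -/
theorem expectation_clamp_symmetric
    {Ω : Type*} [MeasurableSpace Ω] (μ : Measure Ω) [IsProbabilityMeasure μ]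
    (R : Ω → ℝ) (hmeas : Measurable R) (hint : Integrable R μ)
    (Q d : ℝ) (hd : 0 ≤ d)
    (hsym : μ.map (fun ω => R ω - Q) = μ.map (fun ω => Q - R ω)) :
    ∫ ω, max (Q - d) (min (Q + d) (R ω)) ∂μ = Q :=
  expectation_clamp_symmetric_general μ R hmeas Q d hd hsym
end

section
/- Let a ≤ b be real numbers and let f : ℝ → ℝ be continuous on [a, b] and strictly monotone increasing on [a, b], and let r ∈ ℝ. Then there exists a unique β* ∈ [a, b] minimizing |f(β) − r| over β ∈ [a, b], and this minimizer satisfies f(β*) = max(f(a), min(f(b), r)), i.e. the value of f at the minimizer is the clamp of r to [f(a), f(b)]. -/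
private lemma clamp_nearest (A B r y : ℝ) (hAB : A ≤ B) (hy1 : A ≤ y) (hy2 : y ≤ B) :
    |max A (min B r) - r| ≤ |y - r| ∧
    (|y - r| ≤ |max A (min B r) - r| → y = max A (min B r)) := by
  rcases le_total r A with h1 | h1
  · rw [min_eq_right (h1.trans hAB), max_eq_left h1,
      abs_of_nonneg (by linarith), abs_of_nonneg (by linarith)]
    exact ⟨by linarith, fun h => by linarith⟩
  · rcases le_total B r with h2 | h2
    · rw [min_eq_left h2, max_eq_right hAB,
        abs_of_nonpos (by linarith), abs_of_nonpos (by linarith)]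
      exact ⟨by linarith, fun h => by linarith⟩
    · rw [min_eq_right h2, max_eq_right h1, sub_self, abs_zero]
      refine ⟨abs_nonneg _, fun h => ?_⟩
      have := abs_nonpos_iff.mp h
      linarith [sub_eq_zero.mp this]

/-- If `f` is continuous and strictly monotone increasing on `[a, b]`
(`a ≤ b`) and `r : ℝ`, then there is a unique minimizer `β*` of `|f β - r|` over
`β ∈ [a, b]`, and at any such minimizer the value of `f` is the clamp of `r` to
`[f a, f b]`, i.e. `f β* = max (f a) (min (f b) r)`. -/
theorem exists_unique_argmin_abs_sub_and_clamp
    (a b r : ℝ) (hab : a ≤ b) (f : ℝ → ℝ)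
    (hcont : ContinuousOn f (Set.Icc a b))
    (hmono : StrictMonoOn f (Set.Icc a b)) :
    (∃! β, β ∈ Set.Icc a b ∧ ∀ β' ∈ Set.Icc a b, |f β - r| ≤ |f β' - r|) ∧
    (∀ β ∈ Set.Icc a b, (∀ β' ∈ Set.Icc a b, |f β - r| ≤ |f β' - r|) →
      f β = max (f a) (min (f b) r)) := by
  set c := max (f a) (min (f b) r) with hc
  have ha : a ∈ Set.Icc a b := ⟨le_refl a, hab⟩
  have hb : b ∈ Set.Icc a b := ⟨hab, le_refl b⟩
  have hfab : f a ≤ f b := (hmono.monotoneOn) ha hb hab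
  have hrange : ∀ β' ∈ Set.Icc a b, f a ≤ f β' ∧ f β' ≤ f b := fun β' hβ' =>
    ⟨hmono.monotoneOn ha hβ' hβ'.1, hmono.monotoneOn hβ' hb hβ'.2⟩
  have hcmem : c ∈ Set.Icc (f a) (f b) := by
    constructor
    · exact le_max_left _ _
    · exact max_le hfab (min_le_left _ _)
  -- get β₀ with f β₀ = c via IVT
  obtain ⟨β₀, hβ₀mem, hβ₀⟩ : ∃ β₀ ∈ Set.Icc a b, f β₀ = c := by
    have := intermediate_value_Icc hab hcont hcmem
    exact this
  have hmin : ∀ β' ∈ Set.Icc a b, |f β₀ - r| ≤ |f β' - r| := by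
    intro β' hβ'
    obtain ⟨h1, h2⟩ := hrange β' hβ'
    rw [hβ₀]
    exact (clamp_nearest (f a) (f b) r (f β') hfab h1 h2).1
  have huniqval : ∀ β ∈ Set.Icc a b, (∀ β' ∈ Set.Icc a b, |f β - r| ≤ |f β' - r|) →
      f β = c := by
    intro β hβ hβmin
    obtain ⟨h1, h2⟩ := hrange β hβ
    have hle : |f β - r| ≤ |c - r| := hβ₀ ▸ hβmin β₀ hβ₀mem
    exact (clamp_nearest (f a) (f b) r (f β) hfab h1 h2).2 hle
  refine ⟨⟨β₀, ⟨hβ₀mem, hmin⟩, ?_⟩, huniqval⟩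
  rintro β ⟨hβ, hβmin⟩
  exact hmono.injOn hβ hβ₀mem ((huniqval β hβ hβmin).trans hβ₀.symm)
end

section
/- Let a ≤ b, d ≥ 0 and Q ∈ ℝ. Let f : ℝ → ℝ be continuous on [a, b] and strictly monotone increasing on [a, b] with f(a) = Q − d and f(b) = Q + d. Let R be an integrable real random variable symmetric about Q. Suppose β* : ℝ → ℝ is any function such that for every r ∈ ℝ, β*(r) ∈ [a, b] and |f(β*(r)) − r| ≤ |f(β) − r| for all β ∈ [a, b]. Then E[f(β*(R))] = Q, i.e. f(β*(R)) is an unbiased estimator of Q. -/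
open MeasureTheory

/-- (Theorem 1 of the paper.) Let `f` be continuous and strictly
monotone increasing on `[a, b]` with `f a = Q - d` and `f b = Q + d` (`d ≥ 0`).
Let `R` be an integrable real random variable symmetric about `Q`, and let
`β* : ℝ → ℝ` select, for every `r`, a minimizer over `[a, b]` of `β ↦ |f β - r|`.
Then `f (β* R)` is an unbiased estimator of `Q`: `E[f (β* (R))] = Q`. -/
theorem unbiased_calibrated_estimator
    {Ω : Type*} [MeasurableSpace Ω] (μ : Measure Ω) [IsProbabilityMeasure μ]
    (a b d Q : ℝ) (hab : a ≤ b) (hd : 0 ≤ d)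
    (f : ℝ → ℝ)
    (hcont : ContinuousOn f (Set.Icc a b))
    (hmono : StrictMonoOn f (Set.Icc a b))
    (hfa : f a = Q - d) (hfb : f b = Q + d)
    (R : Ω → ℝ) (hmeas : Measurable R) (hint : Integrable R μ)
    (hsym : μ.map (fun ω => R ω - Q) = μ.map (fun ω => Q - R ω))
    (βstar : ℝ → ℝ)
    (hβmem : ∀ r : ℝ, βstar r ∈ Set.Icc a b)
    (hβmin : ∀ r : ℝ, ∀ β ∈ Set.Icc a b, |f (βstar r) - r| ≤ |f β - r|) :
    ∫ ω, f (βstar (R ω)) ∂μ = Q := by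
  set h : ℝ → ℝ := fun x => max (-d) (min d x) with hh_def
  have hh_cont : Continuous h := continuous_const.max (continuous_const.min continuous_id)
  have hh_bound : ∀ x, |h x| ≤ d := by
    intro x
    rw [abs_le]
    constructor
    · exact le_max_left _ _
    · exact max_le (by linarith) (min_le_left _ _)
  have hh_odd : ∀ x, h (-x) = - h x := by
    intro x
    simp only [hh_def, max_def, min_def]
    split_ifs <;> linarith
  -- Step 1: f (βstar r) = Q + h (r - Q)
  have hkey : ∀ r : ℝ, f (βstar r) = Q + h (r - Q) := by
    intro r
    set c : ℝ := Q + h (r - Q) with hc_def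
    have hcL : Q - d ≤ c := by
      have h1 : -d ≤ h (r - Q) := le_max_left _ _
      rw [hc_def]; linarith
    have hcU : c ≤ Q + d := by
      have h1 : h (r - Q) ≤ d := (abs_le.mp (hh_bound _)).2
      linarith
    -- c is in the image of f on [a,b]
    obtain ⟨β, hβab, hfβ⟩ : c ∈ f '' Set.Icc a b := by
      apply intermediate_value_Icc hab hcont
      rw [hfa, hfb]; exact ⟨hcL, hcU⟩
    have hy_mem := hβmem r
    have hyL : Q - d ≤ f (βstar r) := by
      rw [← hfa]; exact hmono.monotoneOn (Set.left_mem_Icc.mpr hab) hy_mem hy_mem.1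
    have hyU : f (βstar r) ≤ Q + d := by
      rw [← hfb]; exact hmono.monotoneOn hy_mem (Set.right_mem_Icc.mpr hab) hy_mem.2
    have h1 : |f (βstar r) - r| ≤ |c - r| := by
      have := hβmin r β hβab
      rwa [hfβ] at this
    -- now case analysis on where r lies
    rcases le_total r (Q - d) with hr | hr
    · have hcc : c = Q - d := by
        simp only [hc_def, hh_def]
        have h2 : min d (r - Q) = r - Q := min_eq_right (by linarith)
        rw [h2, max_eq_left (by linarith)]; ring
      rw [hcc] at h1 ⊢
      have e1 : |f (βstar r) - r| = f (βstar r) - r := abs_of_nonneg (by linarith)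
      have e2 : |Q - d - r| = Q - d - r := abs_of_nonneg (by linarith)
      rw [e1, e2] at h1
      linarith
    rcases le_total (Q + d) r with hr2 | hr2
    · have hcc : c = Q + d := by
        simp only [hc_def, hh_def]
        have h2 : min d (r - Q) = d := min_eq_left (by linarith)
        rw [h2, max_eq_right (by linarith)]
      rw [hcc] at h1 ⊢
      have e1 : |f (βstar r) - r| = r - f (βstar r) := by
        rw [abs_sub_comm]; exact abs_of_nonneg (by linarith)
      have e2 : |Q + d - r| = r - (Q + d) := by
        rw [abs_sub_comm]; exact abs_of_nonneg (by linarith)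
      rw [e1, e2] at h1
      linarith
    · have hcc : c = r := by
        simp only [hc_def, hh_def]
        have h2 : min d (r - Q) = r - Q := min_eq_right (by linarith)
        rw [h2, max_eq_right (by linarith)]; ring
      rw [hcc] at h1
      simp only [sub_self, abs_zero] at h1
      have : f (βstar r) = r := by
        have := abs_nonneg (f (βstar r) - r)
        have h3 : |f (βstar r) - r| = 0 := le_antisymm h1 this
        have := abs_eq_zero.mp h3
        linarith
      rw [this, hcc]
  -- Step 2: the integral
  have hX : Measurable (fun ω => R ω - Q) := hmeas.sub measurable_const
  have hY : Measurable (fun ω => Q - R ω) := measurable_const.sub hmeas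
  have hint_h : Integrable (fun ω => h (R ω - Q)) μ := by
    apply (integrable_const d).mono'
      ((hh_cont.measurable.comp hX).aestronglyMeasurable)
    exact ae_of_all _ fun ω => by simpa using hh_bound (R ω - Q)
  have hI : ∫ ω, h (R ω - Q) ∂μ = 0 := by
    have e1 : ∫ ω, h (R ω - Q) ∂μ = ∫ x, h x ∂(μ.map (fun ω => R ω - Q)) :=
      (integral_map hX.aemeasurable hh_cont.aestronglyMeasurable).symm
    have e2 : ∫ x, h x ∂(μ.map (fun ω => Q - R ω)) = ∫ ω, h (Q - R ω) ∂μ :=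
      integral_map hY.aemeasurable hh_cont.aestronglyMeasurable
    have e3 : ∫ ω, h (Q - R ω) ∂μ = - ∫ ω, h (R ω - Q) ∂μ := by
      rw [← integral_neg]
      congr 1
      ext ω
      rw [show Q - R ω = -(R ω - Q) by ring, hh_odd]
    have e4 : ∫ x, h x ∂(μ.map (fun ω => R ω - Q)) = ∫ x, h x ∂(μ.map (fun ω => Q - R ω)) := by
      rw [hsym]
    have : ∫ ω, h (R ω - Q) ∂μ = - ∫ ω, h (R ω - Q) ∂μ :=
      ((e1.trans e4).trans e2).trans e3
    linarith
  calc ∫ ω, f (βstar (R ω)) ∂μ = ∫ ω, (Q + h (R ω - Q)) ∂μ := by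
        congr 1; ext ω; exact hkey (R ω)
    _ = Q + ∫ ω, h (R ω - Q) ∂μ := by
        rw [integral_add (integrable_const Q) hint_h, integral_const]
        simp
    _ = Q := by rw [hI]; ring
end
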